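/- For every integer n ≥ 2, the sum over k from 2 to n of H_k/((k+2)(k+1)k(k−1)) equals (23n^2+57n+28)/(36(n+1)(n+2)) − H_{n+1}/(3n(n+1)(n+2)) − (1/3)·H_{n+1}^{(2)}. -/

import Mathlib

/-- The `n`-th harmonic number `H_n = ∑_{k=1}^n 1/k`, with `H_0 = 0`. -/
def H (n : ℕ) : ℚ := ∑ k ∈ Finset.range n, 1 / ((k : ℚ) + 1)

/-- The generalized harmonic number of order 2, `H_n^{(2)} = ∑_{k=1}^n 1/k^2`, with `H_0^{(2)} = 0`. -/
def H2 (n : ℕ) : ℚ := ∑ k ∈ Finset.range n, 1 / ((k : ℚ) + 1) ^ 2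

/-!
The right-hand side `closedForm n` is a discrete antiderivative of the summand: after writing
`H (n + 2) = H (n + 1) + 1/(n+2)` and `H2 (n + 2) = H2 (n + 1) + 1/(n+2)^2`, the difference
`closedForm (n + 1) - closedForm n` is a rational-function identity. Both sides vanish at
`n = 1`, so induction starts there.
-/

lemma H_succ (n : ℕ) : H (n + 1) = H n + 1 / ((n : ℚ) + 1) := by
  simp [H, Finset.sum_range_succ]

lemma H2_succ (n : ℕ) : H2 (n + 1) = H2 n + 1 / ((n : ℚ) + 1) ^ 2 := by
  simp [H2, Finset.sum_range_succ]

def closedForm (n : ℕ) : ℚ :=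
  (23 * (n : ℚ) ^ 2 + 57 * (n : ℚ) + 28) / (36 * ((n : ℚ) + 1) * ((n : ℚ) + 2))
    - H (n + 1) / (3 * (n : ℚ) * ((n : ℚ) + 1) * ((n : ℚ) + 2))
    - (1 / 3) * H2 (n + 1)

lemma closedForm_one : closedForm 1 = 0 := by
  norm_num [closedForm, H, H2, Finset.sum_range_succ]

lemma closedForm_succ_sub {n : ℕ} (hn : 1 ≤ n) :
    closedForm (n + 1) - closedForm n =
      H (n + 1) / (((n : ℚ) + 3) * ((n : ℚ) + 2) * ((n : ℚ) + 1) * (n : ℚ)) := by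
  have hn0 : (n : ℚ) ≠ 0 := by positivity
  unfold closedForm
  rw [H_succ (n + 1), H2_succ (n + 1)]
  push_cast
  field_simp
  ring

lemma sum_H_div_eq_closedForm {n : ℕ} (hn : 1 ≤ n) :
    ∑ k ∈ Finset.Icc 2 n, H k / (((k : ℚ) + 2) * ((k : ℚ) + 1) * (k : ℚ) * ((k : ℚ) - 1)) =
      closedForm n := by
  induction n, hn using Nat.le_induction with
  | base => simp [closedForm_one]
  | succ m hm ih =>
    rw [Finset.sum_Icc_succ_top (by omega), ih, eq_comm, ← sub_eq_iff_eq_add',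
      closedForm_succ_sub hm]
    push_cast
    ring

theorem stmt_12 (n : ℕ) (hn : 2 ≤ n) :
    ∑ k ∈ Finset.Icc 2 n, H k / (((k : ℚ) + 2) * ((k : ℚ) + 1) * (k : ℚ) * ((k : ℚ) - 1)) =
      (23 * (n : ℚ) ^ 2 + 57 * (n : ℚ) + 28) / (36 * ((n : ℚ) + 1) * ((n : ℚ) + 2))
        - H (n + 1) / (3 * (n : ℚ) * ((n : ℚ) + 1) * ((n : ℚ) + 2))
        - (1 / 3) * H2 (n + 1) :=
  sum_H_div_eq_closedForm (by omega)
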